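/- arXiv:2203.16342 — 5 statements merged into one kernel-verified Lean document; each statement's English description precedes it below -/
import Mathlib

section
/- Let V = k³ with basis x₀, x₁, x₂ over a field k, and define the linear map c : V ⊗ V → V ⊗ V by c(xᵢ ⊗ xⱼ) = −x_{2i−j mod 3} ⊗ xᵢ. Then c satisfies the braid equation (c ⊗ id)(id ⊗ c)(c ⊗ id) = (id ⊗ c)(c ⊗ id)(id ⊗ c) on V ⊗ V ⊗ V. -/
set_option maxHeartbeats 2000000
set_option synthInstance.maxHeartbeats 1000000


open scoped TensorProduct

/-- Let `V = k³` with basis `x₀, x₁, x₂` (here `V = ZMod 3 → k` with standard basis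
`e i = Pi.single i 1`).  Any linear map `c : V ⊗ V → V ⊗ V` satisfying
`c (xᵢ ⊗ xⱼ) = - x_{2i-j} ⊗ xᵢ` (indices mod 3) satisfies the braid equation
`(c ⊗ id)(id ⊗ c)(c ⊗ id) = (id ⊗ c)(c ⊗ id)(id ⊗ c)` on `V ⊗ V ⊗ V`. -/
theorem stmt1 (k : Type) [Field k]
    (c : ((ZMod 3 → k) ⊗[k] (ZMod 3 → k)) →ₗ[k] ((ZMod 3 → k) ⊗[k] (ZMod 3 → k)))
    (hc : ∀ i j : ZMod 3,
      c (Pi.single i (1 : k) ⊗ₜ[k] Pi.single j (1 : k)) =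
        - (Pi.single (2 * i - j) (1 : k) ⊗ₜ[k] Pi.single i (1 : k))) :
    (TensorProduct.map c LinearMap.id) ∘ₗ
      ((TensorProduct.assoc k (ZMod 3 → k) (ZMod 3 → k) (ZMod 3 → k)).symm.toLinearMap ∘ₗ
        TensorProduct.map LinearMap.id c ∘ₗ
        (TensorProduct.assoc k (ZMod 3 → k) (ZMod 3 → k) (ZMod 3 → k)).toLinearMap) ∘ₗ
      (TensorProduct.map c LinearMap.id)
    =
    ((TensorProduct.assoc k (ZMod 3 → k) (ZMod 3 → k) (ZMod 3 → k)).symm.toLinearMap ∘ₗ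
        TensorProduct.map LinearMap.id c ∘ₗ
        (TensorProduct.assoc k (ZMod 3 → k) (ZMod 3 → k) (ZMod 3 → k)).toLinearMap) ∘ₗ
      (TensorProduct.map c LinearMap.id) ∘ₗ
      ((TensorProduct.assoc k (ZMod 3 → k) (ZMod 3 → k) (ZMod 3 → k)).symm.toLinearMap ∘ₗ
        TensorProduct.map LinearMap.id c ∘ₗ
        (TensorProduct.assoc k (ZMod 3 → k) (ZMod 3 → k) (ZMod 3 → k)).toLinearMap) := by
  apply (((Pi.basisFun k (ZMod 3)).tensorProduct (Pi.basisFun k (ZMod 3))).tensorProduct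
    (Pi.basisFun k (ZMod 3))).ext
  rintro ⟨⟨i, j⟩, l⟩
  have hb : ∀ m : ZMod 3, (Pi.basisFun k (ZMod 3)) m = Pi.single m (1 : k) := by
    intro m; ext x; simp [Pi.basisFun_apply, Pi.single, Function.update]
  have ha : ∀ x, (TensorProduct.assoc k (ZMod 3 → k) (ZMod 3 → k) (ZMod 3 → k)) (-x) =
      -(TensorProduct.assoc k (ZMod 3 → k) (ZMod 3 → k) (ZMod 3 → k)) x :=
    fun x => map_neg (TensorProduct.assoc k (ZMod 3 → k) (ZMod 3 → k) (ZMod 3 → k)) x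
  have ha' : ∀ x, (TensorProduct.assoc k (ZMod 3 → k) (ZMod 3 → k) (ZMod 3 → k)).symm (-x) =
      -(TensorProduct.assoc k (ZMod 3 → k) (ZMod 3 → k) (ZMod 3 → k)).symm x :=
    fun x => map_neg (TensorProduct.assoc k (ZMod 3 → k) (ZMod 3 → k) (ZMod 3 → k)).symm x
  have hm : ∀ (f : ((ZMod 3 → k) ⊗[k] (ZMod 3 → k)) ⊗[k] (ZMod 3 → k) →ₗ[k]
      ((ZMod 3 → k) ⊗[k] (ZMod 3 → k)) ⊗[k] (ZMod 3 → k)) (x), f (-x) = -f x :=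
    fun f x => map_neg f x
  have hm' : ∀ (f : (ZMod 3 → k) ⊗[k] ((ZMod 3 → k) ⊗[k] (ZMod 3 → k)) →ₗ[k]
      (ZMod 3 → k) ⊗[k] ((ZMod 3 → k) ⊗[k] (ZMod 3 → k))) (x), f (-x) = -f x :=
    fun f x => map_neg f x
  simp [hb, hc, TensorProduct.neg_tmul, TensorProduct.tmul_neg, ha, ha', hm, hm']
  ring_nf
end

section
/- Let V = k³ with basis x₀, x₁, x₂ and define c' : V ⊗ V → V ⊗ V by c'(xᵢ ⊗ xⱼ) = −xⱼ ⊗ x_{2j−i mod 3}. Then c' satisfies the braid equation on V ⊗ V ⊗ V. -/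
set_option maxHeartbeats 2000000
set_option synthInstance.maxHeartbeats 400000


open scoped TensorProduct

/-- Let `V = k³` with basis `x₀, x₁, x₂` (here `V = ZMod 3 → k` with standard basis
`e i = Pi.single i 1`).  Any linear map `c : V ⊗ V → V ⊗ V` satisfying
`c' (xᵢ ⊗ xⱼ) = - xⱼ ⊗ x_{2j-i}` (indices mod 3) satisfies the braid equation
`(c ⊗ id)(id ⊗ c)(c ⊗ id) = (id ⊗ c)(c ⊗ id)(id ⊗ c)` on `V ⊗ V ⊗ V`. -/
theorem stmt2 (k : Type) [Field k]
    (c : ((ZMod 3 → k) ⊗[k] (ZMod 3 → k)) →ₗ[k] ((ZMod 3 → k) ⊗[k] (ZMod 3 → k)))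
    (hc : ∀ i j : ZMod 3,
      c (Pi.single i (1 : k) ⊗ₜ[k] Pi.single j (1 : k)) =
        - (Pi.single j (1 : k) ⊗ₜ[k] Pi.single (2 * j - i) (1 : k))) :
    (TensorProduct.map c LinearMap.id) ∘ₗ
      ((TensorProduct.assoc k (ZMod 3 → k) (ZMod 3 → k) (ZMod 3 → k)).symm.toLinearMap ∘ₗ
        TensorProduct.map LinearMap.id c ∘ₗ
        (TensorProduct.assoc k (ZMod 3 → k) (ZMod 3 → k) (ZMod 3 → k)).toLinearMap) ∘ₗ
      (TensorProduct.map c LinearMap.id)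
    =
    ((TensorProduct.assoc k (ZMod 3 → k) (ZMod 3 → k) (ZMod 3 → k)).symm.toLinearMap ∘ₗ
        TensorProduct.map LinearMap.id c ∘ₗ
        (TensorProduct.assoc k (ZMod 3 → k) (ZMod 3 → k) (ZMod 3 → k)).toLinearMap) ∘ₗ
      (TensorProduct.map c LinearMap.id) ∘ₗ
      ((TensorProduct.assoc k (ZMod 3 → k) (ZMod 3 → k) (ZMod 3 → k)).symm.toLinearMap ∘ₗ
        TensorProduct.map LinearMap.id c ∘ₗ
        (TensorProduct.assoc k (ZMod 3 → k) (ZMod 3 → k) (ZMod 3 → k)).toLinearMap) := by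
  have hc' : ∀ i j : ZMod 3,
      c (Pi.single i (1 : k) ⊗ₜ[k] Pi.single j (1 : k)) =
        (-1 : k) • (Pi.single j (1 : k) ⊗ₜ[k] Pi.single (2 * j - i) (1 : k)) := by
    intro i j; rw [hc]; exact (neg_one_smul k _).symm
  apply Module.Basis.ext (((Pi.basisFun k (ZMod 3)).tensorProduct (Pi.basisFun k (ZMod 3))).tensorProduct (Pi.basisFun k (ZMod 3)))
  rintro ⟨⟨i, j⟩, l⟩
  simp only [Module.Basis.tensorProduct_apply, Pi.basisFun_apply, LinearMap.comp_apply,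
    LinearEquiv.coe_coe]
  simp only [TensorProduct.map_tmul, LinearMap.id_coe, id_eq, hc',
    ← TensorProduct.smul_tmul', TensorProduct.tmul_smul, map_smul,
    TensorProduct.assoc_tmul, TensorProduct.assoc_symm_tmul, smul_smul,
    neg_mul, one_mul, mul_one, neg_neg, one_smul, neg_smul]
  ring_nf
end

section
/- The Fomin–Kirillov algebra FK₃ (the quotient of k⟨x₀,x₁,x₂⟩ by x₀² = x₁² = x₂² = 0 and x₀x₁ + x₁x₂ + x₂x₀ = x₁x₀ + x₂x₁ + x₀x₂ = 0) has dimension 12 as a k-vector space, with basis {1, x₀, x₁, x₂, x₂x₀, x₀x₂, x₁x₀, x₀x₁, x₀x₁x₀, x₂x₀x₂, x₂x₀x₁, x₂x₀x₁x₀}. -/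
noncomputable section

/-- The defining relations of the Fomin–Kirillov algebra `FK₃`. -/
inductive FKRel (k : Type) [Field k] :
    FreeAlgebra k (Fin 3) → FreeAlgebra k (Fin 3) → Prop
  | sq (i : Fin 3) : FKRel k (FreeAlgebra.ι k i * FreeAlgebra.ι k i) 0
  | r1 : FKRel k (FreeAlgebra.ι k 0 * FreeAlgebra.ι k 1 +
      FreeAlgebra.ι k 1 * FreeAlgebra.ι k 2 +
      FreeAlgebra.ι k 2 * FreeAlgebra.ι k 0) 0
  | r2 : FKRel k (FreeAlgebra.ι k 1 * FreeAlgebra.ι k 0 +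
      FreeAlgebra.ι k 2 * FreeAlgebra.ι k 1 +
      FreeAlgebra.ι k 0 * FreeAlgebra.ι k 2) 0

/-- The Fomin–Kirillov algebra `FK₃`: the quotient of the free algebra
`k⟨x₀,x₁,x₂⟩` by the relations `xᵢ² = 0`, `x₀x₁ + x₁x₂ + x₂x₀ = 0` and
`x₁x₀ + x₂x₁ + x₀x₂ = 0`. -/
abbrev FK3 (k : Type) [Field k] := RingQuot (FKRel k)

/-- The generators `x₀, x₁, x₂` of `FK₃`. -/
def xg (k : Type) [Field k] (i : Fin 3) : FK3 k :=
  RingQuot.mkAlgHom k (FKRel k) (FreeAlgebra.ι k i)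

/-!
The twelve words are the normal forms of the rewriting system
`xᵢxᵢ → 0`, `x₁x₂ → -x₀x₁ - x₂x₀`, `x₂x₁ → -x₁x₀ - x₀x₂`,
`x₀x₂x₀ → x₂x₀x₂`, `x₁x₀x₁ → x₀x₁x₀`, `x₁x₀x₂ → x₂x₀x₁`,
whose rules hold in `FK₃`. Hence their span contains `1` and is stable under right
multiplication by the generators, so it is all of `FK₃`.

For independence, the left regular representation of `FK₃` in this basis is written down as
three integer `12 × 12` matrices satisfying the defining relations; in the induced
representation the twelve words send the first standard basis vector to the twelve standard
basis vectors.
-/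

theorem Submodule.span_range_eq_top_of_mul_mem {R A ι : Type*} [CommSemiring R] [Semiring A]
    [Algebra R A] {s : Set A} (hs : Algebra.adjoin R s = ⊤) (b : ι → A)
    (h1 : 1 ∈ span R (Set.range b)) (hmul : ∀ j, ∀ x ∈ s, b j * x ∈ span R (Set.range b)) :
    span R (Set.range b) = ⊤ := by
  set S := span R (Set.range b)
  have hS : ∀ y ∈ S, ∀ x ∈ s, y * x ∈ S := by
    intro y hy x hx
    induction hy using span_induction with
    | mem y hy => obtain ⟨j, rfl⟩ := hy; exact hmul j x hx
    | zero => simp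
    | add y z _ _ hy hz => simpa only [add_mul] using S.add_mem hy hz
    | smul r y _ hy => simpa only [smul_mul_assoc] using S.smul_mem r hy
  have hadj : ∀ a ∈ Algebra.adjoin R s, ∀ y ∈ S, y * a ∈ S := by
    intro a ha
    induction ha using Algebra.adjoin_induction with
    | mem x hx => exact fun y hy => hS y hy x hx
    | algebraMap r =>
      intro y hy
      rw [← Algebra.commutes, ← Algebra.smul_def]
      exact S.smul_mem r hy
    | add a c _ _ ha hc =>
      intro y hy
      simpa only [mul_add] using S.add_mem (ha y hy) (hc y hy)
    | mul a c _ _ ha hc =>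
      intro y hy
      simpa only [mul_assoc] using hc _ (ha y hy)
  refine eq_top_iff.2 fun a _ => ?_
  simpa using hadj a (hs ▸ Algebra.mem_top) 1 h1

theorem LinearIndependent.of_map_eq_single {R M ι : Type*} [Semiring R] [AddCommMonoid M]
    [Module R M] [DecidableEq ι] {b : ι → M} (L : M →ₗ[R] ι → R)
    (hL : ∀ i, L (b i) = Pi.single i 1) : LinearIndependent R b :=
  .of_comp L (by simpa only [Function.comp_def, hL] using Pi.linearIndependent_single_one ι R)

structure SatisfiesFKRel {A : Type*} [Ring A] (x : Fin 3 → A) : Prop where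
  mul_self : ∀ i, x i * x i = 0
  cyclic : x 0 * x 1 + x 1 * x 2 + x 2 * x 0 = 0
  cyclic_rev : x 1 * x 0 + x 2 * x 1 + x 0 * x 2 = 0

namespace SatisfiesFKRel

variable {A : Type*} [Ring A] {x : Fin 3 → A}

theorem map {B : Type*} [Ring B] (hx : SatisfiesFKRel x) (f : A →+* B) :
    SatisfiesFKRel (f ∘ x) where
  mul_self i := by simp only [Function.comp_apply, ← map_mul, hx.mul_self, map_zero]
  cyclic := by simp only [Function.comp_apply, ← map_mul, ← map_add, hx.cyclic, map_zero]
  cyclic_rev := by simp only [Function.comp_apply, ← map_mul, ← map_add, hx.cyclic_rev, map_zero]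

theorem mul_mul_self (hx : SatisfiesFKRel x) (y : A) (i : Fin 3) : y * x i * x i = 0 := by
  rw [mul_assoc, hx.mul_self, mul_zero]

theorem mul_cyclic (hx : SatisfiesFKRel x) (y : A) :
    y * x 0 * x 1 + y * x 1 * x 2 + y * x 2 * x 0 = 0 := by
  simp only [mul_assoc, ← mul_add, hx.cyclic, mul_zero]

theorem mul_cyclic_rev (hx : SatisfiesFKRel x) (y : A) :
    y * x 1 * x 0 + y * x 2 * x 1 + y * x 0 * x 2 = 0 := by
  simp only [mul_assoc, ← mul_add, hx.cyclic_rev, mul_zero]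

theorem mul_x₁_x₂ (hx : SatisfiesFKRel x) (y : A) :
    y * x 1 * x 2 = -(y * x 0 * x 1) - y * x 2 * x 0 := by
  rw [← sub_eq_zero, ← hx.mul_cyclic y]
  abel

theorem mul_x₂_x₁ (hx : SatisfiesFKRel x) (y : A) :
    y * x 2 * x 1 = -(y * x 1 * x 0) - y * x 0 * x 2 := by
  rw [← sub_eq_zero, ← hx.mul_cyclic_rev y]
  abel

theorem mul_x₀_x₂_x₀ (hx : SatisfiesFKRel x) (y : A) :
    y * x 0 * x 2 * x 0 = y * x 2 * x 0 * x 2 := by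
  -- both sides equal `-(y x₀ x₁ x₂)`
  have h₁ := hx.mul_cyclic (y * x 0)
  have h₂ := congrArg (· * x 2) (hx.mul_cyclic y)
  simp only [add_mul, zero_mul, hx.mul_mul_self, zero_add, add_zero] at h₁ h₂
  exact add_left_cancel (h₁.trans h₂.symm)

theorem mul_x₁_x₀_x₁ (hx : SatisfiesFKRel x) (y : A) :
    y * x 1 * x 0 * x 1 = y * x 0 * x 1 * x 0 := by
  -- both sides equal `-(y x₀ x₂ x₁)`
  have h₁ := congrArg (· * x 1) (hx.mul_cyclic_rev y)
  have h₂ := hx.mul_cyclic_rev (y * x 0)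
  simp only [add_mul, zero_mul, hx.mul_mul_self, add_zero] at h₁ h₂
  exact add_right_cancel (h₁.trans h₂.symm)

theorem mul_x₁_x₀_x₂ (hx : SatisfiesFKRel x) (y : A) :
    y * x 1 * x 0 * x 2 = y * x 2 * x 0 * x 1 := by
  -- both sides equal `-(y x₁ x₂ x₁)`
  have h₁ := hx.mul_cyclic_rev (y * x 1)
  have h₂ := congrArg (· * x 1) (hx.mul_cyclic y)
  simp only [add_mul, zero_mul, hx.mul_mul_self, zero_add] at h₁ h₂
  exact add_left_cancel (h₁.trans h₂.symm)

end SatisfiesFKRel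

namespace FK3

variable (k : Type) [Field k]

theorem satisfiesFKRel_xg : SatisfiesFKRel (xg k) := by
  have hsq (i : Fin 3) := RingQuot.mkAlgHom_rel k (FKRel.sq (k := k) i)
  have h₁ := RingQuot.mkAlgHom_rel k (FKRel.r1 (k := k))
  have h₂ := RingQuot.mkAlgHom_rel k (FKRel.r2 (k := k))
  simp only [map_add, map_mul, map_zero] at hsq h₁ h₂
  exact ⟨hsq, h₁, h₂⟩

variable {k} {A : Type*} [Ring A] [Algebra k A]

def lift (x : Fin 3 → A) (hx : SatisfiesFKRel x) : FK3 k →ₐ[k] A :=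
  RingQuot.liftAlgHom k ⟨FreeAlgebra.lift k x, fun _ _ h => by
    induction h with
    | sq i => simpa using hx.mul_self i
    | r1 => simpa using hx.cyclic
    | r2 => simpa using hx.cyclic_rev⟩

theorem lift_xg (x : Fin 3 → A) (hx : SatisfiesFKRel x) (i : Fin 3) :
    lift x hx (xg k i) = x i := by
  rw [lift, xg, RingQuot.liftAlgHom_mkAlgHom_apply, FreeAlgebra.lift_ι_apply]

variable (k)

theorem adjoin_range_xg : Algebra.adjoin k (Set.range (xg k)) = ⊤ := by
  have h : Set.range (xg k) = RingQuot.mkAlgHom k (FKRel k) '' Set.range (FreeAlgebra.ι k) :=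
    Set.range_comp _ _
  rw [h, Algebra.adjoin_image, FreeAlgebra.adjoin_range_ι, Algebra.map_top, AlgHom.range_eq_top]
  exact RingQuot.mkAlgHom_surjective k _

end FK3

def fkWords {A : Type*} [Monoid A] (x : Fin 3 → A) : Fin 12 → A :=
  ![1, x 0, x 1, x 2, x 2 * x 0, x 0 * x 2, x 1 * x 0, x 0 * x 1,
    x 0 * x 1 * x 0, x 2 * x 0 * x 2, x 2 * x 0 * x 1, x 2 * x 0 * x 1 * x 0]

theorem map_fkWords {A B F : Type*} [Monoid A] [Monoid B] [FunLike F A B] [MonoidHomClass F A B]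
    (f : F) (x : Fin 3 → A) (j : Fin 12) : f (fkWords x j) = fkWords (f ∘ x) j := by
  fin_cases j <;> simp [fkWords]

theorem SatisfiesFKRel.fkWords_mul_mem_span {R A : Type*} [Ring R] [Ring A] [Module R A]
    {x : Fin 3 → A} (hx : SatisfiesFKRel x) (j : Fin 12) (i : Fin 3) :
    fkWords x j * x i ∈ Submodule.span R (Set.range (fkWords x)) := by
  -- a leading `1` lets the rules `mul_x…`, which need a left factor `y`, rewrite short words too
  rw [← one_mul (fkWords x j)]
  fin_cases j <;> fin_cases i <;>
    simp only [fkWords, Fin.zero_eta, Fin.mk_one, Fin.reduceFinMk, Matrix.cons_val, ← mul_assoc,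
      hx.mul_mul_self, hx.mul_x₁_x₂, hx.mul_x₂_x₁, hx.mul_x₀_x₂_x₀, hx.mul_x₁_x₀_x₁,
      hx.mul_x₁_x₀_x₂, zero_mul, neg_zero, sub_zero, zero_sub] <;>
    simp only [one_mul, Submodule.zero_mem, Submodule.neg_mem_iff, Submodule.sub_mem_iff_left,
      Submodule.mem_span_of_mem, Matrix.range_cons, Matrix.range_empty, Set.union_empty,
      Set.mem_union, Set.mem_singleton_iff, true_or, or_true]

/-- The left regular representation of `FK₃`: column `j` of `fkMatrix i` is the coordinate
vector of `xᵢ * fkWords (xg k) j` in the basis `fkWords (xg k)`. -/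
def fkMatrix : Fin 3 → Matrix (Fin 12) (Fin 12) ℤ
  | 0 => !![0, 0, 0, 0, 0, 0, 0, 0, 0, 0, 0, 0;
      1, 0, 0, 0, 0, 0, 0, 0, 0, 0, 0, 0;
      0, 0, 0, 0, 0, 0, 0, 0, 0, 0, 0, 0;
      0, 0, 0, 0, 0, 0, 0, 0, 0, 0, 0, 0;
      0, 0, 0, 0, 0, 0, 0, 0, 0, 0, 0, 0;
      0, 0, 0, 1, 0, 0, 0, 0, 0, 0, 0, 0;
      0, 0, 0, 0, 0, 0, 0, 0, 0, 0, 0, 0;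
      0, 0, 1, 0, 0, 0, 0, 0, 0, 0, 0, 0;
      0, 0, 0, 0, 0, 0, 1, 0, 0, 0, 0, 0;
      0, 0, 0, 0, 1, 0, 0, 0, 0, 0, 0, 0;
      0, 0, 0, 0, 0, 0, 0, 0, 0, 0, 0, 0;
      0, 0, 0, 0, 0, 0, 0, 0, 0, 0, -1, 0]
  | 1 => !![0, 0, 0, 0, 0, 0, 0, 0, 0, 0, 0, 0;
      0, 0, 0, 0, 0, 0, 0, 0, 0, 0, 0, 0;
      1, 0, 0, 0, 0, 0, 0, 0, 0, 0, 0, 0;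
      0, 0, 0, 0, 0, 0, 0, 0, 0, 0, 0, 0;
      0, 0, 0, -1, 0, 0, 0, 0, 0, 0, 0, 0;
      0, 0, 0, 0, 0, 0, 0, 0, 0, 0, 0, 0;
      0, 1, 0, 0, 0, 0, 0, 0, 0, 0, 0, 0;
      0, 0, 0, -1, 0, 0, 0, 0, 0, 0, 0, 0;
      0, 0, 0, 0, -1, 0, 0, 1, 0, 0, 0, 0;
      0, 0, 0, 0, 0, 0, 0, 0, 0, 0, 0, 0;
      0, 0, 0, 0, 0, 1, 0, 0, 0, 0, 0, 0;
      0, 0, 0, 0, 0, 0, 0, 0, 0, 1, 0, 0]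
  | 2 => !![0, 0, 0, 0, 0, 0, 0, 0, 0, 0, 0, 0;
      0, 0, 0, 0, 0, 0, 0, 0, 0, 0, 0, 0;
      0, 0, 0, 0, 0, 0, 0, 0, 0, 0, 0, 0;
      1, 0, 0, 0, 0, 0, 0, 0, 0, 0, 0, 0;
      0, 1, 0, 0, 0, 0, 0, 0, 0, 0, 0, 0;
      0, 0, -1, 0, 0, 0, 0, 0, 0, 0, 0, 0;
      0, 0, -1, 0, 0, 0, 0, 0, 0, 0, 0, 0;
      0, 0, 0, 0, 0, 0, 0, 0, 0, 0, 0, 0;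
      0, 0, 0, 0, 0, 0, 0, 0, 0, 0, 0, 0;
      0, 0, 0, 0, 0, 1, -1, 0, 0, 0, 0, 0;
      0, 0, 0, 0, 0, 0, 0, 1, 0, 0, 0, 0;
      0, 0, 0, 0, 0, 0, 0, 0, 1, 0, 0, 0]

theorem satisfiesFKRel_fkMatrix : SatisfiesFKRel fkMatrix :=
  ⟨by decide, by decide, by decide⟩

theorem fkWords_fkMatrix_col (j : Fin 12) : (fkWords fkMatrix j).col 0 = Pi.single j 1 := by
  revert j
  decide

namespace FK3

variable (k : Type) [Field k]

theorem span_fkWords_xg :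
    Submodule.span k (Set.range (fkWords (xg k))) = ⊤ := by
  refine Submodule.span_range_eq_top_of_mul_mem (adjoin_range_xg k) _
    (Submodule.subset_span ⟨0, rfl⟩) ?_
  rintro j _ ⟨i, rfl⟩
  exact (satisfiesFKRel_xg k).fkWords_mul_mem_span j i

def regularRep : FK3 k →ₐ[k] Matrix (Fin 12) (Fin 12) k :=
  lift _ (satisfiesFKRel_fkMatrix.map (Int.castRingHom k).mapMatrix)

theorem regularRep_fkWords_col (j : Fin 12) :
    (regularRep k (fkWords (xg k) j)).col 0 = Pi.single j 1 := by
  have h : regularRep k ∘ xg k = (Int.castRingHom k).mapMatrix ∘ fkMatrix :=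
    funext (lift_xg _ _)
  rw [map_fkWords, h, ← map_fkWords]
  ext i
  have hi := congrFun (fkWords_fkMatrix_col j) i
  rw [Matrix.col_apply] at hi
  rw [Matrix.col_apply, RingHom.mapMatrix_apply, Matrix.map_apply, hi]
  simp only [Pi.single_apply, apply_ite (Int.castRingHom k), map_one, map_zero]

theorem linearIndependent_fkWords_xg : LinearIndependent k (fkWords (xg k)) :=
  .of_map_eq_single
    (LinearMap.pi fun i => Matrix.entryLinearMap k k i 0 ∘ₗ (regularRep k).toLinearMap)
    (regularRep_fkWords_col k)

end FK3

theorem stmt4_general (k : Type) [Field k] :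
    Module.finrank k (FK3 k) = 12 ∧
    ∃ B : Module.Basis (Fin 12) k (FK3 k), ∀ idx : Fin 12,
      B idx = ![1, xg k 0, xg k 1, xg k 2,
        xg k 2 * xg k 0, xg k 0 * xg k 2, xg k 1 * xg k 0, xg k 0 * xg k 1,
        xg k 0 * xg k 1 * xg k 0, xg k 2 * xg k 0 * xg k 2,
        xg k 2 * xg k 0 * xg k 1, xg k 2 * xg k 0 * xg k 1 * xg k 0] idx := by
  let B := Module.Basis.mk (FK3.linearIndependent_fkWords_xg k) (FK3.span_fkWords_xg k).ge
  exact ⟨(Module.finrank_eq_card_basis B).trans (Fintype.card_fin 12), B,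
    Module.Basis.mk_apply _ _⟩

/-- `FK₃` is 12-dimensional, with basis
`{1, x₀, x₁, x₂, x₂x₀, x₀x₂, x₁x₀, x₀x₁, x₀x₁x₀, x₂x₀x₂, x₂x₀x₁, x₂x₀x₁x₀}`. -/
theorem stmt4 (k : Type) [Field k] [CharZero k] :
    Module.finrank k (FK3 k) = 12 ∧
    ∃ B : Module.Basis (Fin 12) k (FK3 k), ∀ idx : Fin 12,
      B idx = ![1, xg k 0, xg k 1, xg k 2,
        xg k 2 * xg k 0, xg k 0 * xg k 2, xg k 1 * xg k 0, xg k 0 * xg k 1,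
        xg k 0 * xg k 1 * xg k 0, xg k 2 * xg k 0 * xg k 2,
        xg k 2 * xg k 0 * xg k 1, xg k 2 * xg k 0 * xg k 1 * xg k 0] idx :=
  stmt4_general k
end
end

section
/- In the Fomin–Kirillov algebra FK₃, every product of five generators vanishes: for any i₁, i₂, i₃, i₄, i₅ in {0,1,2}, x_{i₁} x_{i₂} x_{i₃} x_{i₄} x_{i₅} = 0. -/
set_option maxHeartbeats 1600000


/-- In the Fomin–Kirillov algebra `FK₃` (equivalently, for any elements `x₀, x₁, x₂` of a
`k`-algebra satisfying its defining relations), every product of five generators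
vanishes. -/
theorem stmt5 (k : Type) [Field k]
    (A : Type) [Ring A] [Algebra k A] (x : Fin 3 → A)
    (hsq : ∀ i, x i * x i = 0)
    (h1 : x 0 * x 1 + x 1 * x 2 + x 2 * x 0 = 0)
    (h2 : x 1 * x 0 + x 2 * x 1 + x 0 * x 2 = 0)
    (i₁ i₂ i₃ i₄ i₅ : Fin 3) :
    x i₁ * x i₂ * x i₃ * x i₄ * x i₅ = 0 := by
  have hsq' : ∀ i, ∀ y : A, x i * (x i * y) = 0 := fun i y => by
    rw [← mul_assoc, hsq, zero_mul]
  have h20 : x 2 * x 0 = -(x 0 * x 1) - x 1 * x 2 := by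
    have := eq_neg_of_add_eq_zero_right h1
    rw [this, neg_add, sub_eq_add_neg]
  have h21 : x 2 * x 1 = -(x 1 * x 0) - x 0 * x 2 := by
    have h2' : x 1 * x 0 + x 0 * x 2 + x 2 * x 1 = 0 := by
      have := eq_neg_of_add_eq_zero_right h2
      rw [this]; abel
    have := eq_neg_of_add_eq_zero_right h2'
    rw [this, neg_add, sub_eq_add_neg]
  have h20' : ∀ y : A, x 2 * (x 0 * y) = -(x 0 * (x 1 * y)) - x 1 * (x 2 * y) := fun y => by
    rw [← mul_assoc, h20, sub_mul, neg_mul, mul_assoc, mul_assoc]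
  have h21' : ∀ y : A, x 2 * (x 1 * y) = -(x 1 * (x 0 * y)) - x 0 * (x 2 * y) := fun y => by
    rw [← mul_assoc, h21, sub_mul, neg_mul, mul_assoc, mul_assoc]
  -- the cubic Gröbner basis element : x₁x₀x₁ = x₀x₁x₀
  have e1 : x 0 * (x 2 * x 1) = -(x 1 * (x 0 * x 1)) := by
    have h02 : x 0 * x 2 = -(x 1 * x 0) - x 2 * x 1 := by
      have := eq_neg_of_add_eq_zero_right h2
      rw [this, neg_add, sub_eq_add_neg]
    rw [← mul_assoc, h02, sub_mul, neg_mul, mul_assoc, mul_assoc, hsq 1, mul_zero, sub_zero]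
  have e2 : x 0 * (x 2 * x 1) = -(x 0 * (x 1 * x 0)) := by
    rw [h21, mul_sub, mul_neg, hsq', sub_zero]
  have h101 : x 1 * (x 0 * x 1) = x 0 * (x 1 * x 0) := by
    have := e1.symm.trans e2
    exact neg_injective this
  have h101' : ∀ y : A, x 1 * (x 0 * (x 1 * y)) = x 0 * (x 1 * (x 0 * y)) := fun y => by
    have := congrArg (· * y) h101
    simpa only [mul_assoc] using this
  have hc : ∀ j : Fin 3, j = 0 ∨ j = 1 ∨ j = 2 := by decide
  rcases hc i₁ with rfl | rfl | rfl <;> rcases hc i₂ with rfl | rfl | rfl <;>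
    rcases hc i₃ with rfl | rfl | rfl <;> rcases hc i₄ with rfl | rfl | rfl <;>
    rcases hc i₅ with rfl | rfl | rfl <;>
    simp only [mul_assoc, hsq, hsq', h20, h20', h21, h21', h101, h101',
      mul_add, mul_sub, mul_neg, add_mul, sub_mul, neg_mul, mul_zero, zero_mul, mul_one, sub_zero, zero_sub, neg_zero,
      neg_neg, add_zero, zero_add, neg_add_rev, sub_self, sub_neg_eq_add]
end

section
/- In the algebra E_{μ,λ} generated by y₀, y₁, y₂ with relations y₀² = y₁² = y₂² = μ and y₁y₀ + y₀y₂ + y₂y₁ = y₀y₁ + y₁y₂ + y₂y₀ = λ, one has yᵢy_lyⱼ = yⱼy_lyᵢ for all pairwise distinct i, j, l in {0,1,2}. -/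
/-- In the cleft object `E_{μ,λ}` (equivalently, for any elements `y₀, y₁, y₂` of a
`k`-algebra satisfying its defining relations), for pairwise distinct
`i, j, l ∈ {0,1,2}` one has `yᵢy_lyⱼ = yⱼy_lyᵢ`. -/
theorem stmt7 (k : Type) [Field k] [CharZero k] (μ lam : k)
    (A : Type) [Ring A] [Algebra k A] (y : Fin 3 → A)
    (hsq : ∀ i, y i * y i = algebraMap k A μ)
    (h1 : y 1 * y 0 + y 0 * y 2 + y 2 * y 1 = algebraMap k A lam)
    (h2 : y 0 * y 1 + y 1 * y 2 + y 2 * y 0 = algebraMap k A lam)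
    (i j l : Fin 3) (hij : i ≠ j) (hjl : j ≠ l) (hil : i ≠ l) :
    y i * y l * y j = y j * y l * y i := by
  have hA : y 0 * y 2 * y 1 = y 1 * y 2 * y 0 := by
    have key : y 0 * y 2 * y 1 - y 1 * y 2 * y 0 =
        y 0 * (y 1 * y 0 + y 0 * y 2 + y 2 * y 1)
          - (y 0 * y 1 + y 1 * y 2 + y 2 * y 0) * y 0
          - (y 0 * y 0) * y 2 + y 2 * (y 0 * y 0) := by noncomm_ring
    rw [h1, h2, hsq, ← Algebra.commutes lam (y 0), ← Algebra.commutes μ (y 2)] at key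
    rw [← sub_eq_zero]
    rw [key]; abel
  have hB : y 2 * y 1 * y 0 = y 0 * y 1 * y 2 := by
    have key : y 2 * y 1 * y 0 - y 0 * y 1 * y 2 =
        (y 1 * y 0 + y 0 * y 2 + y 2 * y 1) * y 0
          - y 0 * (y 0 * y 1 + y 1 * y 2 + y 2 * y 0)
          - y 1 * (y 0 * y 0) + (y 0 * y 0) * y 1 := by noncomm_ring
    rw [h1, h2, hsq, ← Algebra.commutes lam (y 0), ← Algebra.commutes μ (y 1)] at key
    rw [← sub_eq_zero]
    rw [key]; abel
  have hC : y 1 * y 0 * y 2 = y 2 * y 0 * y 1 := by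
    have key : y 1 * y 0 * y 2 - y 2 * y 0 * y 1 =
        y 1 * (y 1 * y 0 + y 0 * y 2 + y 2 * y 1)
          - (y 0 * y 1 + y 1 * y 2 + y 2 * y 0) * y 1
          - (y 1 * y 1) * y 0 + y 0 * (y 1 * y 1) := by noncomm_ring
    rw [h1, h2, hsq, ← Algebra.commutes lam (y 1), ← Algebra.commutes μ (y 0)] at key
    rw [← sub_eq_zero]
    rw [key]; abel
  fin_cases i <;> fin_cases j <;> fin_cases l <;> simp_all <;>
    first
      | exact hA | exact hA.symm | exact hB | exact hB.symm
      | exact hC | exact hC.symm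
end
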